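/- Let R be a commutative ring, n ≥ 4, i ≠ j in [n], ξ ∈ R, and set g = ∧²t_{i,j}(ξ). Then for every H ∈ ∧⁴[n] and all A, C ∈ ∧²[n] with A ∩ C = ∅: (1) if H = A ∪ C then a_{A,C}^H(g) = sign(A,C); (2) if H ≠ A ∪ C, i ∈ C, j ∉ C, and H = A ⊔ C′ where C′ = (C∖{i})∪{j}, then a_{A,C}^H(g) = sign(A, C′)·g_{C,C′}; (3) if H ≠ A ∪ C, i ∈ A, j ∉ A, and H = A′ ⊔ C where A′ = (A∖{i})∪{j}, then a_{A,C}^H(g) = sign(A′, C)·g_{A,A′}; (4) in all other cases a_{A,C}^H(g) = 0. -/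

import Mathlib

open Finset MvPolynomial Matrix

/-- `V n` is the set `∧²[n]` of 2-element subsets of `[n] = {1, …, n}`
(modelled on `Fin n`). -/
abbrev V (n : ℕ) := {I : Finset (Fin n) // I.card = 2}

/-- The variable `x_S` of the polynomial ring `R[x_I : I ∈ ∧²[n]]`
(interpreted as `0` if `S` is not a 2-element set, a case which never occurs below). -/
noncomputable def var2 (R : Type*) [CommRing R] (n : ℕ) (S : Finset (Fin n)) :
    MvPolynomial (V n) R :=
  if h : S.card = 2 then MvPolynomial.X ⟨S, h⟩ else 0

/-- The Plücker polynomial `f_{i,J} = Σ_{h=1}^{3} (−1)^h x_{{i,j_h}} x_{J∖{j_h}}`,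
where `J = {j₁ < j₂ < j₃}`; the exponent `h` is recovered as the number of elements
of `J` that are `≤ j_h`. -/
noncomputable def pluckerPoly (R : Type*) [CommRing R] (n : ℕ) (i : Fin n)
    (J : Finset (Fin n)) : MvPolynomial (V n) R :=
  ∑ j ∈ J, ((-1 : ℤ) ^ (J.filter (fun a => a ≤ j)).card) •
    (var2 R n {i, j} * var2 R n (J.erase j))

/-- The Plücker ideal `Plu(n,R)`, generated by all Plücker polynomials. -/
noncomputable def pluIdeal (R : Type*) [CommRing R] (n : ℕ) :
    Ideal (MvPolynomial (V n) R) :=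
  Ideal.span {p | ∃ (i : Fin n) (J : Finset (Fin n)), i ∉ J ∧ J.card = 3 ∧
    p = pluckerPoly R n i J}

/-- `sign(I,J)`: the sign of the permutation sorting the concatenation of the increasing
lists of `I` and of `J` into increasing order, computed as `(−1)^(number of inversions)`. -/
def signIJ {n : ℕ} (I J : Finset (Fin n)) : ℤ :=
  (-1) ^ (((I ×ˢ J).filter (fun p => p.2 < p.1)).card)

/-- The smaller element of a 2-element subset. -/
def lo {n : ℕ} (I : V n) : Fin n :=
  I.1.min' (Finset.card_pos.mp (by rw [I.2]; norm_num))

/-- The larger element of a 2-element subset. -/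
def hi {n : ℕ} (I : V n) : Fin n :=
  I.1.max' (Finset.card_pos.mp (by rw [I.2]; norm_num))

/-- The exterior square (Cauchy–Binet) of a matrix: the `N×N` matrix, indexed by
2-element subsets, whose entry at `({i₁<i₂},{j₁<j₂})` is
`x_{i₁j₁}x_{i₂j₂} − x_{i₁j₂}x_{i₂j₁}`. -/
def wedge {R : Type*} [CommRing R] {n : ℕ} (x : Matrix (Fin n) (Fin n) R) :
    Matrix (V n) (V n) R :=
  fun I J => x (lo I) (lo J) * x (hi I) (hi J) - x (lo I) (hi J) * x (hi I) (lo J)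

/-- The elementary transvection `t_{S,T}(ξ) = e + ξ·e_{S,T}` of `GL_N(R)`, for distinct
2-element subsets `S, T` (interpreted as the identity in the degenerate cases, which
never occur below). -/
def transvN (R : Type*) [CommRing R] (n : ℕ) (S T : Finset (Fin n)) (ξ : R) :
    Matrix (V n) (V n) R :=
  if h : S.card = 2 ∧ T.card = 2 ∧ S ≠ T then
    1 + Matrix.single ⟨S, h.1⟩ ⟨T, h.2.1⟩ ξ
  else 1

/-- The exterior number `a_{A,C}^H(g) = Σ_{(B,D)} sign(B,D)·g_{A,B}·g_{C,D}`, the sum over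
all ordered pairs `(B,D)` of disjoint 2-element subsets with `B ∪ D = H`. -/
def extNum {R : Type*} [CommRing R] {n : ℕ} (g : Matrix (V n) (V n) R)
    (H : Finset (Fin n)) (A C : V n) : R :=
  ∑ B : V n, ∑ D : V n,
    if B.1 ∩ D.1 = ∅ ∧ B.1 ∪ D.1 = H then (signIJ B.1 D.1 : R) * (g A B * g C D) else 0

/-- The 4×4 minor `M_I^J(x)` with rows `I` and columns `J` (both 4-element sets). -/
noncomputable def minor4 {R : Type*} [CommRing R] {n : ℕ}
    (x : Matrix (Fin n) (Fin n) R) (I J : Finset (Fin n)) : R :=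
  if h : I.card = 4 ∧ J.card = 4 then
    Matrix.det (Matrix.of fun a b : Fin 4 =>
      x ↑(I.orderIsoOfFin h.1 a) ↑(J.orderIsoOfFin h.2 b))
  else 0

/-- The elementary group `E(n,R)`: the subgroup of `GL_n(R)` generated by the elementary
transvections `t_{i,j}(ξ) = e + ξ·e_{i,j}`, `i ≠ j`. -/
def elemGroup (R : Type*) [CommRing R] (n : ℕ) :
    Subgroup (Matrix.GeneralLinearGroup (Fin n) R) :=
  Subgroup.closure {x | ∃ (i j : Fin n) (ξ : R), i ≠ j ∧
    (x : Matrix (Fin n) (Fin n) R) = 1 + Matrix.single i j ξ}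

/-- `g` satisfies the exterior-number conditions with witness `θ`. -/
def extCond {R : Type*} [CommRing R] {n : ℕ} (g : Matrix (V n) (V n) R)
    (θ : Finset (Fin n) → Finset (Fin n) → R) : Prop :=
  ∀ H : Finset (Fin n), H.card = 4 → ∀ A C : V n,
    (¬ Disjoint A.1 C.1 → extNum g H A C = 0) ∧
    (Disjoint A.1 C.1 → extNum g H A C = (signIJ A.1 C.1 : R) * θ (A.1 ∪ C.1) H)

/-- The symmetric matrix `B_𝓘` with `(B_𝓘)_{M,L} = sign(M,L)` if `M ⊔ L = 𝓘`
and `0` otherwise. -/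
def bMat (R : Type*) [CommRing R] (n : ℕ) (𝓘 : Finset (Fin n)) :
    Matrix (V n) (V n) R :=
  fun M L => if M.1 ∩ L.1 = ∅ ∧ M.1 ∪ L.1 = 𝓘 then (signIJ M.1 L.1 : R) else 0

/-! The matrix `g = ∧²t_{i,j}(ξ)` has ones on the diagonal, and its only other nonzero entries
are the `g_{A,A'}` with `i ∈ A`, `j ∉ A` and `A' = (A∖{i})∪{j}`. So a pair `(B,D)` contributes
to `a_{A,C}^H(g)` only if it is `(A,C)`, `(A,C')` or `(A',C)`; the pair `(A',C')` cannot occur,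
since `i` does not lie in both of the disjoint sets `A` and `C`. At most one of the three
unions equals `H`, and the corresponding term is the claimed value. Case (3) is case (2) with
`A` and `C` exchanged, because `a_{A,C}^H = a_{C,A}^H`: two disjoint 2-element sets have
`sign(B,D) = sign(D,B)`. -/

theorem signIJ_comm {n : ℕ} {B D : Finset (Fin n)} (hBD : Disjoint B D) (h : Even (#B * #D)) :
    signIJ B D = signIJ D B := by
  have hswap : #((D ×ˢ B).filter fun p => p.2 < p.1) =
      #((B ×ˢ D).filter fun p => ¬p.2 < p.1) := by
    refine card_nbij' Prod.swap Prod.swap ?_ ?_ (fun _ _ => rfl) (fun _ _ => rfl)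
    · rintro ⟨d, b⟩ h
      simp only [coe_filter, mem_product, Set.mem_ofPred_eq, Prod.swap] at h ⊢
      exact ⟨h.1.symm, not_lt.mpr h.2.le⟩
    · rintro ⟨b, d⟩ h
      simp only [coe_filter, mem_product, Set.mem_ofPred_eq, Prod.swap] at h ⊢
      refine ⟨h.1.symm, lt_of_le_of_ne (not_lt.mp h.2) ?_⟩
      rintro rfl
      exact disjoint_left.mp hBD h.1.1 h.1.2
  rw [← card_product, ← card_filter_add_card_filter_not (fun p => p.2 < p.1), Nat.even_add] at h
  rw [signIJ, signIJ, hswap]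
  exact neg_one_pow_congr h

section ExteriorNumbers

variable {R : Type*} [CommRing R] {n : ℕ}

theorem lo_lt_hi (I : V n) : lo I < hi I :=
  min'_lt_max'_of_card _ (by rw [I.2]; norm_num)

theorem eq_pair_lo_hi (I : V n) : I.1 = {lo I, hi I} :=
  (eq_of_subset_of_card_le (insert_subset (min'_mem _ _) (singleton_subset_iff.mpr (max'_mem _ _)))
    (I.2.trans (card_pair (lo_lt_hi I).ne).symm).le).symm

theorem disjoint_of_card_union_eq_four {B D : V n} (h : #(B.1 ∪ D.1) = 4) : Disjoint B.1 D.1 :=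
  card_union_eq_card_add_card.mp (by rw [h, B.2, D.2])

theorem signIJ_comm_of_disjoint {B D : V n} (h : Disjoint B.1 D.1) : signIJ B.1 D.1 = signIJ D.1 B.1 :=
  signIJ_comm h (by rw [B.2, D.2]; decide)

theorem extNum_comm (g : Matrix (V n) (V n) R) (H : Finset (Fin n)) (A C : V n) :
    extNum g H A C = extNum g H C A := by
  rw [extNum, extNum, sum_comm]
  refine sum_congr rfl fun D _ => sum_congr rfl fun B _ => ?_
  rw [inter_comm, union_comm]
  split_ifs with h
  · rw [signIJ_comm_of_disjoint (disjoint_iff_inter_eq_empty.mpr h.1)]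
    ring
  · rfl

theorem extNum_eq_zero {g : Matrix (V n) (V n) R} {H : Finset (Fin n)} {A C : V n}
    (h : ∀ B D : V n, B.1 ∪ D.1 = H → g A B * g C D = 0) : extNum g H A C = 0 :=
  sum_eq_zero fun B _ => sum_eq_zero fun D _ => by
    split_ifs with hBD
    · rw [h B D hBD.2, mul_zero]
    · rfl

theorem extNum_eq_single {g : Matrix (V n) (V n) R} {H : Finset (Fin n)} {A C : V n}
    (B₀ D₀ : V n) (hdisj : Disjoint B₀.1 D₀.1) (hunion : B₀.1 ∪ D₀.1 = H)
    (h : ∀ B D : V n, B.1 ∪ D.1 = H → (B, D) ≠ (B₀, D₀) → g A B * g C D = 0) :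
    extNum g H A C = (signIJ B₀.1 D₀.1 : R) * (g A B₀ * g C D₀) := by
  rw [extNum, ← Fintype.sum_prod_type', Fintype.sum_eq_single (B₀, D₀),
    if_pos ⟨disjoint_iff_inter_eq_empty.mp hdisj, hunion⟩]
  rintro ⟨B, D⟩ hne
  split_ifs with hBD
  · rw [h B D hBD.2 hne, mul_zero]
  · rfl

end ExteriorNumbers

section Transvection

variable {R : Type*} [CommRing R] {n : ℕ} {i j : Fin n} (ξ : R)

theorem transvection_apply (a b : Fin n) :
    (1 + single i j ξ) a b = (if a = b then 1 else 0) + (if i = a ∧ j = b then ξ else 0) := by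
  simp [one_apply, single_apply]

theorem transvection_apply_self (hij : i ≠ j) (p : Fin n) : (1 + single i j ξ) p p = 1 := by
  rw [transvection_apply, if_pos rfl, if_neg fun h => hij (h.1.trans h.2.symm), add_zero]

theorem transvection_apply_mul_apply_eq_zero {p q r s : Fin n} (hpr : p ≠ r)
    (h₀ : ¬(p = q ∧ r = s)) (h₁ : ¬(p = q ∧ i = r ∧ j = s)) (h₂ : ¬(i = p ∧ j = q ∧ r = s)) :
    (1 + single i j ξ) p q * (1 + single i j ξ) r s = 0 := by
  simp only [transvection_apply]
  split_ifs <;> first | omega | ring1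

theorem wedge_transvection_self (hij : i ≠ j) (A : V n) :
    wedge (1 + single i j ξ) A A = 1 := by
  have hab := lo_lt_hi A
  rw [wedge, transvection_apply_self ξ hij, transvection_apply_self ξ hij,
    transvection_apply_mul_apply_eq_zero ξ hab.ne (by omega) (by omega) (by omega)]
  ring

theorem wedge_transvection_eq_zero {A B : V n} (hBA : B ≠ A)
    (hB : ¬(i ∈ A.1 ∧ j ∉ A.1 ∧ B.1 = insert j (A.1.erase i))) :
    wedge (1 + single i j ξ) A B = 0 := by
  have hab := lo_lt_hi A
  have hcd := lo_lt_hi B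
  have hApair := eq_pair_lo_hi A
  have hBpair := eq_pair_lo_hi B
  set a := lo A
  set b := hi A
  set c := lo B
  set d := hi B
  have hne : ¬(c = a ∧ d = b) := fun ⟨hc, hd⟩ => hBA (Subtype.ext (by rw [hBpair, hApair, hc, hd]))
  have hlo : ¬(i = a ∧ j ≠ a ∧ j ≠ b ∧ (c = j ∧ d = b ∨ c = b ∧ d = j)) := by
    rintro ⟨rfl, hja, hjb, hcases⟩
    refine hB ⟨by simp [hApair], by simp [hApair, hja, hjb], ?_⟩
    rw [hApair, hBpair]
    ext x
    simp only [mem_insert, mem_singleton, mem_erase]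
    omega
  have hhi : ¬(i = b ∧ j ≠ a ∧ j ≠ b ∧ (c = a ∧ d = j ∨ c = j ∧ d = a)) := by
    rintro ⟨rfl, hja, hjb, hcases⟩
    refine hB ⟨by simp [hApair], by simp [hApair, hja, hjb], ?_⟩
    rw [hApair, hBpair]
    ext x
    simp only [mem_insert, mem_singleton, mem_erase]
    omega
  rw [wedge, transvection_apply_mul_apply_eq_zero ξ hab.ne (by omega) (by omega) (by omega),
    transvection_apply_mul_apply_eq_zero ξ hab.ne (by omega) (by omega) (by omega), sub_zero]

theorem wedge_transvection_mul_ne_zero_cases {A C : V n} (hAC : Disjoint A.1 C.1)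
    {B D : V n} (h : wedge (1 + single i j ξ) A B * wedge (1 + single i j ξ) C D ≠ 0) :
    (B = A ∧ D = C) ∨
    (B = A ∧ i ∈ C.1 ∧ j ∉ C.1 ∧ D.1 = insert j (C.1.erase i)) ∨
    (i ∈ A.1 ∧ j ∉ A.1 ∧ B.1 = insert j (A.1.erase i) ∧ D = C) := by
  have hB : B = A ∨ (i ∈ A.1 ∧ j ∉ A.1 ∧ B.1 = insert j (A.1.erase i)) := by
    by_contra hB
    rw [not_or] at hB
    exact h (by rw [wedge_transvection_eq_zero ξ hB.1 hB.2, zero_mul])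
  have hD : D = C ∨ (i ∈ C.1 ∧ j ∉ C.1 ∧ D.1 = insert j (C.1.erase i)) := by
    by_contra hD
    rw [not_or] at hD
    exact h (by rw [wedge_transvection_eq_zero ξ hD.1 hD.2, mul_zero])
  rcases hB with hB | hB <;> rcases hD with hD | hD
  · exact .inl ⟨hB, hD⟩
  · exact .inr (.inl ⟨hB, hD⟩)
  · exact .inr (.inr ⟨hB.1, hB.2.1, hB.2.2, hD⟩)
  · exact absurd hD.1 (disjoint_left.mp hAC hB.1)

theorem extNum_wedge_transvection_union (hij : i ≠ j) {A C : V n} (hAC : Disjoint A.1 C.1) :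
    extNum (wedge (1 + single i j ξ)) (A.1 ∪ C.1) A C = (signIJ A.1 C.1 : R) := by
  rw [extNum_eq_single A C hAC rfl, wedge_transvection_self ξ hij,
    wedge_transvection_self ξ hij, mul_one, mul_one]
  intro B D hBD hne
  by_contra h
  rcases wedge_transvection_mul_ne_zero_cases ξ hAC h with
    ⟨rfl, rfl⟩ | ⟨rfl, hiC, -, hD⟩ | ⟨hiA, -, hB, rfl⟩
  · exact hne rfl
  · have hi : i ∈ B.1 ∪ D.1 := hBD ▸ mem_union_right _ hiC
    simp [hD, hij, disjoint_right.mp hAC hiC] at hi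
  · have hi : i ∈ B.1 ∪ D.1 := hBD ▸ mem_union_left _ hiA
    simp [hB, hij, disjoint_left.mp hAC hiA] at hi

theorem extNum_wedge_transvection_shift_right (hij : i ≠ j) {H : Finset (Fin n)} (hH : #H = 4)
    {A C : V n} (hAC : Disjoint A.1 C.1) (hiC : i ∈ C.1) (C' : V n)
    (hC' : C'.1 = insert j (C.1.erase i)) (hne : H ≠ A.1 ∪ C.1)
    (hunion : H = A.1 ∪ insert j (C.1.erase i)) :
    extNum (wedge (1 + single i j ξ)) H A C =
      (signIJ A.1 (insert j (C.1.erase i)) : R) * wedge (1 + single i j ξ) C C' := by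
  rw [← hC'] at hunion ⊢
  rw [extNum_eq_single A C' (disjoint_of_card_union_eq_four (hunion ▸ hH)) hunion.symm,
    wedge_transvection_self ξ hij, one_mul]
  intro B D hBD hne'
  by_contra h
  rcases wedge_transvection_mul_ne_zero_cases ξ hAC h with
    ⟨rfl, rfl⟩ | ⟨rfl, -, -, hD⟩ | ⟨hiA, -, -, -⟩
  · exact hne hBD.symm
  · exact hne' (by rw [Subtype.ext (hD.trans hC'.symm)])
  · exact disjoint_left.mp hAC hiA hiC

theorem extNum_wedge_transvection_shift_left (hij : i ≠ j) {H : Finset (Fin n)} (hH : #H = 4)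
    {A C : V n} (hAC : Disjoint A.1 C.1) (hiA : i ∈ A.1) (A' : V n)
    (hA' : A'.1 = insert j (A.1.erase i)) (hne : H ≠ A.1 ∪ C.1)
    (hunion : H = insert j (A.1.erase i) ∪ C.1) :
    extNum (wedge (1 + single i j ξ)) H A C =
      (signIJ (insert j (A.1.erase i)) C.1 : R) * wedge (1 + single i j ξ) A A' := by
  have hdisj : Disjoint A'.1 C.1 := disjoint_of_card_union_eq_four (by rw [hA', ← hunion, hH])
  rw [extNum_comm, extNum_wedge_transvection_shift_right ξ hij hH hAC.symm hiA A' hA'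
      (by rwa [union_comm]) (by rwa [union_comm]), ← hA', signIJ_comm_of_disjoint hdisj.symm]

theorem extNum_wedge_transvection_eq_zero {H : Finset (Fin n)} {A C : V n}
    (hAC : Disjoint A.1 C.1) (hne : H ≠ A.1 ∪ C.1)
    (hC : ¬(i ∈ C.1 ∧ j ∉ C.1 ∧ H = A.1 ∪ insert j (C.1.erase i)))
    (hA : ¬(i ∈ A.1 ∧ j ∉ A.1 ∧ H = insert j (A.1.erase i) ∪ C.1)) :
    extNum (wedge (1 + single i j ξ)) H A C = 0 := by
  refine extNum_eq_zero fun B D hBD => ?_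
  by_contra h
  rcases wedge_transvection_mul_ne_zero_cases ξ hAC h with
    ⟨rfl, rfl⟩ | ⟨rfl, hiC, hjC, hD⟩ | ⟨hiA, hjA, hB, rfl⟩
  · exact hne hBD.symm
  · exact hC ⟨hiC, hjC, by rw [← hBD, hD]⟩
  · exact hA ⟨hiA, hjA, by rw [← hBD, hB]⟩

end Transvection

/-- exterior numbers of the exterior square of an elementary transvection
`g = ∧²t_{i,j}(ξ)`: for disjoint `A, C` and `H ∈ ∧⁴[n]`, (1) `a_{A,C}^{A∪C}(g) = sign(A,C)`;
(2) if `H ≠ A∪C`, `i ∈ C`, `j ∉ C` and `H = A ⊔ C'` with `C' = (C∖{i})∪{j}`, then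
`a_{A,C}^H(g) = sign(A,C')·g_{C,C'}`; (3) symmetrically with the roles of `A` and `C`
exchanged; (4) otherwise `a_{A,C}^H(g) = 0`. -/
theorem stmt14 (R : Type*) [CommRing R] (n : ℕ)
    (i j : Fin n) (hij : i ≠ j) (ξ : R)
    (H : Finset (Fin n)) (hH : H.card = 4) (A C : V n) (hAC : Disjoint A.1 C.1) :
    (H = A.1 ∪ C.1 →
      extNum (wedge (1 + Matrix.single i j ξ)) H A C = (signIJ A.1 C.1 : R)) ∧
    (∀ (hiC : i ∈ C.1) (hjC : j ∉ C.1), H ≠ A.1 ∪ C.1 →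
      H = A.1 ∪ insert j (C.1.erase i) →
      extNum (wedge (1 + Matrix.single i j ξ)) H A C =
        (signIJ A.1 (insert j (C.1.erase i)) : R) *
          wedge (1 + Matrix.single i j ξ) C
            ⟨insert j (C.1.erase i), by
              rw [Finset.card_insert_of_notMem
                    (fun hm => hjC (Finset.mem_of_mem_erase hm)),
                Finset.card_erase_of_mem hiC, C.2]⟩) ∧
    (∀ (hiA : i ∈ A.1) (hjA : j ∉ A.1), H ≠ A.1 ∪ C.1 →
      H = insert j (A.1.erase i) ∪ C.1 →
      extNum (wedge (1 + Matrix.single i j ξ)) H A C =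
        (signIJ (insert j (A.1.erase i)) C.1 : R) *
          wedge (1 + Matrix.single i j ξ) A
            ⟨insert j (A.1.erase i), by
              rw [Finset.card_insert_of_notMem
                    (fun hm => hjA (Finset.mem_of_mem_erase hm)),
                Finset.card_erase_of_mem hiA, A.2]⟩) ∧
    (H ≠ A.1 ∪ C.1 →
      ¬(i ∈ C.1 ∧ j ∉ C.1 ∧ H = A.1 ∪ insert j (C.1.erase i)) →
      ¬(i ∈ A.1 ∧ j ∉ A.1 ∧ H = insert j (A.1.erase i) ∪ C.1) →
      extNum (wedge (1 + Matrix.single i j ξ)) H A C = 0) := by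
  refine ⟨?_, fun hiC _ hne hunion => ?_, fun hiA _ hne hunion => ?_,
    extNum_wedge_transvection_eq_zero ξ hAC⟩
  · rintro rfl
    exact extNum_wedge_transvection_union ξ hij hAC
  · exact extNum_wedge_transvection_shift_right ξ hij hH hAC hiC _ rfl hne hunion
  · exact extNum_wedge_transvection_shift_left ξ hij hH hAC hiA _ rfl hne hunion
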